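/- For all cd-monomials u and v, β(u d v) ≥ β(u c² v), with equality when u and v are both empty. -/

import Mathlib

open scoped TensorProduct

/-- cd-monomials: `false` is the letter `c`, `true` is the letter `d`. -/
abbrev Mon := List Bool

/-- The polynomial algebra `F = ℚ⟨c,d⟩`. -/
abbrev F := MonoidAlgebra ℚ (FreeMonoid Bool)

noncomputable def mono (w : Mon) : F := MonoidAlgebra.single (FreeMonoid.ofList w) 1

noncomputable def cF : F := mono [false]
noncomputable def dF : F := mono [true]

noncomputable def gLetter : Bool → F
  | false => dF
  | true  => cF * dF

noncomputable def gMon : Mon → F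
  | [] => 0
  | a :: t => gLetter a * mono t + mono [a] * gMon t

/-- The derivation `G` with `G c = d`, `G d = cd`. -/
noncomputable def G : F →ₗ[ℚ] F :=
  (Finsupp.lsum ℚ fun w => LinearMap.toSpanSingleton ℚ F (gMon (FreeMonoid.toList w))) ∘ₗ
    (MonoidAlgebra.coeffLinearEquiv ℚ).toLinearMap

/-- `Psi n` is the cd-index of the Boolean lattice of rank `n+1`. -/
noncomputable def Psi : ℕ → F
  | 0 => 1
  | n+1 => Psi n * cF + G (Psi n)

/-- degree of a cd-monomial (`c` has degree 1, `d` degree 2). -/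
def deg (w : Mon) : ℕ := w.length + w.count true

/-- `beta v` : coefficient of `v` in the cd-index of the Boolean lattice of rank `deg v + 1`. -/
noncomputable def beta (w : Mon) : ℚ := (Psi (deg w)).coeff (FreeMonoid.ofList w)


-- basic lemmas
lemma ofList_inj : Function.Injective (FreeMonoid.ofList (α := Bool)) :=
  fun a b h => by simpa using congrArg FreeMonoid.toList h

lemma mono_mul (a b : Mon) : mono a * mono b = mono (a ++ b) := by
  simp [mono, MonoidAlgebra.single_mul_single, FreeMonoid.ofList_append]

lemma mono_apply (u w : Mon) : (mono u).coeff (FreeMonoid.ofList w) = if u = w then 1 else 0 := by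
  classical
  rw [mono, MonoidAlgebra.coeff_single, Finsupp.single_apply]
  by_cases h : u = w
  · simp [h]
  · rw [if_neg h, if_neg fun hh => h (ofList_inj hh)]

@[simp] lemma F_add_apply (f g : F) (x : FreeMonoid Bool) : (f + g).coeff x = f.coeff x + g.coeff x := rfl
@[simp] lemma F_zero_apply (x : FreeMonoid Bool) : (0 : F).coeff x = 0 := rfl
@[simp] lemma F_smul_apply (r : ℚ) (f : F) (x : FreeMonoid Bool) : (r • f).coeff x = r * f.coeff x := rfl

/-- children of a monomial under G -/
def children : Mon → List Mon
  | [] => []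
  | false :: t => (true :: t) :: (children t).map (false :: ·)
  | true :: t => (false :: true :: t) :: (children t).map (true :: ·)

lemma mul_list_sum (a : F) (l : List F) : a * l.sum = (l.map (a * ·)).sum := by
  induction l with
  | nil => simp
  | cons x l ih => simp [mul_add, ih]

lemma gMon_eq (u : Mon) : gMon u = ((children u).map mono).sum := by
  induction u with
  | nil => simp [gMon, children]
  | cons a t ih =>
    cases a <;>
      simp [gMon, children, gLetter, dF, cF, mono_mul, ih, mul_list_sum,
        List.map_map, Function.comp_def]

lemma listsum_apply (l : List Mon) (w : Mon) :
    ((l.map mono).sum).coeff (FreeMonoid.ofList w) = l.count w := by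
  induction l with
  | nil => simp
  | cons p l ih =>
    by_cases h : p = w
    · subst h; simp [List.count_cons, ih, mono_apply]; ring
    · simp [Finsupp.add_apply, List.count_cons, ih, mono_apply, h]

/-- special parents arising at the first position -/
def spec : Bool → Mon → List Mon
  | true, t => [false :: t]
  | false, true :: t' => [true :: t']
  | false, _ => []

def parents : Mon → List Mon
  | [] => []
  | a :: t => spec a t ++ (parents t).map (a :: ·)

lemma parents_nil : parents [] = [] := rfl
lemma parents_cons (a : Bool) (t : Mon) :
    parents (a :: t) = spec a t ++ (parents t).map (a :: ·) := rfl
lemma children_nil : children [] = [] := rfl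
lemma children_false (t : Mon) :
    children (false :: t) = (true :: t) :: (children t).map (false :: ·) := rfl
lemma children_true (t : Mon) :
    children (true :: t) = (false :: true :: t) :: (children t).map (true :: ·) := rfl

lemma count_cons' (x w : Mon) (l : List Mon) :
    (x :: l).count w = l.count w + if x = w then 1 else 0 := by
  simp [List.count_cons]

lemma count_cons_map (a : Bool) (l : List Mon) (w : Mon) :
    (l.map (a :: ·)).count (a :: w) = l.count w := by
  induction l with
  | nil => simp
  | cons x l ih =>
    rw [List.map_cons, count_cons', count_cons', ih]
    by_cases h : x = w
    · simp [h]
    · simp [h, fun hh : a :: x = a :: w => h (by injection hh)]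

lemma count_map_zero (f : Mon → Mon) (l : List Mon) (w : Mon) (h : ∀ x, f x ≠ w) :
    (l.map f).count w = 0 := by
  rw [List.count_eq_zero]
  intro hm
  obtain ⟨x, _, hx⟩ := List.mem_map.mp hm
  exact h x hx

lemma count_cons_map_ne (a : Bool) (l : List Mon) (w : Mon)
    (h : ∀ x, a :: x ≠ w) : (l.map (a :: ·)).count w = 0 :=
  count_map_zero _ _ _ h

lemma if_comm_eq (t s : Mon) : (if s = t then (1:ℕ) else 0) = if t = s then 1 else 0 := by
  by_cases h : s = t
  · simp [h]
  · simp [h, Ne.symm h]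

lemma count_nil_parents (w : Mon) : (parents w).count [] = 0 := by
  cases w with
  | nil => rfl
  | cons a t =>
    rw [parents_cons, List.count_append,
      count_cons_map_ne a _ _ (fun x h => List.cons_ne_nil _ _ h), add_zero]
    cases a with
    | true => rfl
    | false => cases t with
      | nil => rfl
      | cons b t' => cases b <;> rfl

lemma count_children (u w : Mon) : (children u).count w = (parents w).count u := by
  induction u generalizing w with
  | nil => rw [children_nil, List.count_nil, count_nil_parents]
  | cons a t ih =>
    cases a with
    | false =>
      rw [children_false, count_cons']
      match w with
      | [] =>
        rw [parents_nil, List.count_nil,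
          count_cons_map_ne false _ _ (fun x h => List.cons_ne_nil _ _ h)]
        simp
      | true :: s =>
        rw [count_cons_map_ne false ((children t)) (true :: s) (fun x h => by simp at h),
          parents_cons true s, show spec true s = [false :: s] from rfl, List.count_append]
        simp [count_cons', count_cons_map_ne true (parents s)
          (false :: t) (fun x h => by simp at h), if_comm_eq]
      | false :: true :: s' =>
        rw [count_cons_map false (children t) (true :: s'), ih (true :: s'),
          parents_cons false (true :: s'), show spec false (true :: s') = [true :: s'] from rfl,
          List.count_append, count_cons_map false (parents (true :: s')) t]
        simp [count_cons']
      | false :: [] =>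
        rw [count_cons_map false (children t) [], ih [],
          parents_cons false [], show spec false [] = ([] : List Mon) from rfl,
          List.nil_append, count_cons_map false (parents []) t]
        simp
      | false :: false :: s' =>
        rw [count_cons_map false (children t) (false :: s'), ih (false :: s'),
          parents_cons false (false :: s'),
          show spec false (false :: s') = ([] : List Mon) from rfl,
          List.nil_append, count_cons_map false (parents (false :: s')) t]
        simp
    | true =>
      rw [children_true, count_cons']
      match w with
      | [] =>
        rw [parents_nil, List.count_nil,
          count_cons_map_ne true _ _ (fun x h => List.cons_ne_nil _ _ h)]
        simp
      | true :: s =>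
        rw [count_cons_map true (children t) s, ih s, parents_cons true s,
          show spec true s = [false :: s] from rfl, List.count_append,
          count_cons_map true (parents s) t]
        simp [count_cons']
      | false :: true :: s' =>
        rw [count_cons_map_ne true (children t) _ (fun x h => by simp at h),
          parents_cons false (true :: s'), show spec false (true :: s') = [true :: s'] from rfl,
          List.count_append,
          count_cons_map_ne false (parents (true :: s')) (true :: t)
            (fun x h => by simp at h)]
        simp [count_cons', if_comm_eq]
      | false :: [] =>
        rw [count_cons_map_ne true (children t) _ (fun x h => by simp at h),
          parents_cons false [], show spec false [] = ([] : List Mon) from rfl,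
          List.nil_append,
          count_cons_map_ne false (parents []) (true :: t)
            (fun x h => by simp at h)]
        simp
      | false :: false :: s' =>
        rw [count_cons_map_ne true (children t) _ (fun x h => by simp at h),
          parents_cons false (false :: s'),
          show spec false (false :: s') = ([] : List Mon) from rfl, List.nil_append,
          count_cons_map_ne false (parents (false :: s')) (true :: t)
            (fun x h => by simp at h)]
        simp

lemma deg_cons (a : Bool) (t : Mon) : deg (a :: t) = deg t + (if a then 2 else 1) := by
  cases a <;> simp [deg, List.count_cons] <;> ring

lemma deg_append (x y : Mon) : deg (x ++ y) = deg x + deg y := by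
  simp [deg, List.count_append]; ring

lemma deg_spec {a : Bool} {t p : Mon} (hp : p ∈ spec a t) : deg p + 1 = deg (a :: t) := by
  cases a with
  | true =>
    simp only [spec, List.mem_singleton] at hp
    subst hp; simp [deg_cons]
  | false =>
    cases t with
    | nil => simp [spec] at hp
    | cons b t' =>
      cases b with
      | true =>
        simp only [spec, List.mem_singleton] at hp
        subst hp; simp [deg_cons]
      | false => simp [spec] at hp

lemma deg_parents {w p : Mon} (hp : p ∈ parents w) : deg p + 1 = deg w := by
  induction w generalizing p with
  | nil => simp [parents_nil] at hp
  | cons a t ih =>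
    rw [parents_cons, List.mem_append] at hp
    rcases hp with hp | hp
    · exact deg_spec hp
    · obtain ⟨q, hq, rfl⟩ := List.mem_map.mp hp
      rw [deg_cons, deg_cons, ← ih hq]
      ring

lemma gMon_apply (u w : Mon) :
    (gMon u).coeff (FreeMonoid.ofList w) = (parents w).count u := by
  rw [gMon_eq, listsum_apply, count_children]

lemma finsupp_sum_count (l : List Mon) (x : F) :
    (x.coeff.sum fun u r => r * (l.count (FreeMonoid.toList u) : ℚ)) =
      (l.map (fun p => x.coeff (FreeMonoid.ofList p))).sum := by
  classical
  induction l with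
  | nil => simp
  | cons p l ih =>
    simp only [count_cons', List.map_cons, List.sum_cons]
    push_cast
    rw [show (x.coeff.sum fun u r => r * ((l.count (FreeMonoid.toList u) : ℚ) +
        if p = FreeMonoid.toList u then 1 else 0)) =
        x.coeff.sum (fun u r => r * (l.count (FreeMonoid.toList u) : ℚ) +
          (if u = FreeMonoid.ofList p then r else 0)) from by
      congr 1
      funext u r
      simp only [mul_add]
      congr 1
      have : (p = FreeMonoid.toList u) ↔ (u = FreeMonoid.ofList p) := by
        constructor
        · intro h; subst h; rfl
        · intro h; subst h; rfl
      by_cases h : u = FreeMonoid.ofList p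
      · rw [if_pos h, if_pos (this.mpr h), mul_one]
      · rw [if_neg h, if_neg (fun hh => h (this.mp hh)), mul_zero]]
    rw [Finsupp.sum_add, ih, Finsupp.sum_ite_self_eq']
    ring

lemma G_apply (x : F) (w : Mon) :
    (G x).coeff (FreeMonoid.ofList w) =
      ((parents w).map (fun p => x.coeff (FreeMonoid.ofList p))).sum := by
  have hG : G x = x.coeff.sum fun u r => r • gMon (FreeMonoid.toList u) := rfl
  rw [hG, ← finsupp_sum_count, MonoidAlgebra.coeff_finsuppSum, Finsupp.sum_apply]
  congr 1
  funext u r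
  rw [F_smul_apply, gMon_apply]

lemma coeff_mul_cF_concat (x : F) (w : Mon) :
    (x * cF).coeff (FreeMonoid.ofList (w ++ [false])) = x.coeff (FreeMonoid.ofList w) := by
  rw [cF, mono, show FreeMonoid.ofList (w ++ [false]) =
      FreeMonoid.ofList w * FreeMonoid.ofList [false] from FreeMonoid.ofList_append _ _]
  rw [MonoidAlgebra.coeff_mul_single_eq_coeff_mul (x := x) _
    (fun a _ => ⟨fun h => mul_right_cancel h, fun h => by rw [h]⟩), mul_one]

lemma coeff_mul_cF_ne (x : F) (w : Mon) (hw : w.getLast? ≠ some false) :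
    (x * cF).coeff (FreeMonoid.ofList w) = 0 := by
  rw [cF, mono]
  apply MonoidAlgebra.mul_single_apply_of_not_exists_mul
  rintro ⟨d, hd⟩
  apply hw
  have : w = FreeMonoid.toList d ++ [false] := congrArg FreeMonoid.toList hd
  rw [this, List.getLast?_concat]

lemma beta_parents_sum (w : Mon) (m : ℕ) (hm : deg w = m + 1) :
    ((parents w).map (fun p => (Psi m).coeff (FreeMonoid.ofList p))).sum =
      ((parents w).map beta).sum := by
  congr 1
  apply List.map_congr_left
  intro p hp
  have : deg p = m := by have := deg_parents hp; omega
  rw [beta, this]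

lemma beta_concat_false (w : Mon) :
    beta (w ++ [false]) = beta w + ((parents (w ++ [false])).map beta).sum := by
  have hdeg : deg (w ++ [false]) = deg w + 1 := by
    rw [deg_append]; simp [deg]
  rw [beta, hdeg, Psi, F_add_apply, coeff_mul_cF_concat, G_apply, ← beta,
    beta_parents_sum _ _ hdeg]

lemma beta_concat_true (w : Mon) :
    beta (w ++ [true]) = ((parents (w ++ [true])).map beta).sum := by
  have hdeg : deg (w ++ [true]) = (deg w + 1) + 1 := by
    rw [deg_append]; simp [deg]
  rw [beta, hdeg, Psi, F_add_apply,
    coeff_mul_cF_ne _ _ (by rw [List.getLast?_concat]; simp), G_apply, zero_add,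
    beta_parents_sum _ _ hdeg]

lemma beta_nil : beta [] = 1 := by
  rw [beta, show deg [] = 0 from rfl, Psi]
  exact Finsupp.single_eq_same

lemma beta_nonneg_aux : ∀ n, ∀ w : Mon, deg w ≤ n → 0 ≤ beta w := by
  intro n
  induction n with
  | zero =>
    intro w hw
    have : w = [] := by
      cases w with
      | nil => rfl
      | cons a t =>
        exfalso
        rw [deg_cons] at hw
        cases a <;> norm_num at hw
    rw [this, beta_nil]; norm_num
  | succ n ih =>
    intro w hw
    have hpar : ∀ p ∈ parents w, 0 ≤ beta p := by
      intro p hp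
      have hdp := deg_parents hp
      exact ih p (by omega)
    rcases List.eq_nil_or_concat w with rfl | ⟨L, b, rfl⟩
    · rw [beta_nil]; norm_num
    · rw [List.concat_eq_append] at *
      have hL : deg L ≤ n := by
        have h1 := deg_append L [b]
        have h2 : deg [b] ≥ 1 := by cases b <;> simp [deg]
        omega
      cases b with
      | false =>
        rw [beta_concat_false]
        have := List.sum_nonneg (l := (parents (L ++ [false])).map beta) (by
          intro q hq
          obtain ⟨p, hp, rfl⟩ := List.mem_map.mp hq
          exact hpar p hp)
        have := ih L hL
        linarith
      | true =>
        rw [beta_concat_true]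
        exact List.sum_nonneg (by
          intro q hq
          obtain ⟨p, hp, rfl⟩ := List.mem_map.mp hq
          exact hpar p hp)

lemma beta_nonneg (w : Mon) : 0 ≤ beta w := beta_nonneg_aux (deg w) w le_rfl

/-- boundary term: if `u` ends in `c`, the parent obtained from the `cd` occurrence
crossing the boundary -/
def bterm (u v : Mon) : List Mon :=
  if u.getLast? = some false then [u.dropLast ++ true :: v] else []

lemma bterm_nil (v : Mon) : bterm [] v = [] := rfl

lemma bterm_single (a : Bool) (v : Mon) :
    bterm [a] v = if a = false then [true :: v] else [] := by
  cases a <;> rfl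

lemma bterm_cons (a b : Bool) (u v : Mon) :
    bterm (a :: b :: u) v = (bterm (b :: u) v).map (a :: ·) := by
  rw [bterm, bterm, List.getLast?_cons_cons]
  by_cases h : (b :: u).getLast? = some false
  · rw [if_pos h, if_pos h, List.map_singleton, List.dropLast_cons₂, List.cons_append]
  · rw [if_neg h, if_neg h]; rfl

/-- the parent of `u c c v` obtained from the `cd` occurrence crossing the right boundary -/
def mtm (u v : Mon) : List Mon :=
  match v with
  | true :: v' => [u ++ false :: true :: v']
  | _ => []

lemma mt_cons (a : Bool) (u v : Mon) : mtm (a :: u) v = (mtm u v).map (a :: ·) := by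
  cases v with
  | nil => rfl
  | cons b v' => cases b <;> rfl

lemma parents_mid_true (u v : Mon) :
    parents (u ++ true :: v) =
      (parents u).map (· ++ true :: v) ++
        (bterm u v ++ ((u ++ false :: v) :: (parents v).map (fun p => u ++ true :: p))) := by
  induction u with
  | nil => simp [parents_cons, parents_nil, bterm_nil, spec]
  | cons a u' ih =>
    rw [List.cons_append, parents_cons, ih, parents_cons a u']
    cases a with
    | true =>
      cases u' with
      | nil =>
        simp [spec, bterm_single, bterm_nil, parents_nil]
      | cons b u'' =>
        simp [spec, bterm_cons, List.map_map, Function.comp_def]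
    | false =>
      cases u' with
      | nil =>
        simp [spec, bterm_single, bterm_nil, parents_nil]
      | cons b u'' =>
        cases b <;> simp [spec, bterm_cons, List.map_map, Function.comp_def]

lemma parents_mid_ff (u v : Mon) :
    parents (u ++ false :: false :: v) =
      (parents u).map (· ++ false :: false :: v) ++
        (mtm u v ++ (parents v).map (fun p => u ++ false :: false :: p)) := by
  induction u with
  | nil =>
    rw [List.nil_append, parents_cons, parents_cons]
    cases v with
    | nil => simp [spec, mtm, parents_nil]
    | cons b v' =>
      cases b <;> simp [spec, mtm, parents_nil, List.map_map, Function.comp_def]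
  | cons a u' ih =>
    rw [List.cons_append, parents_cons, ih, parents_cons a u']
    cases a with
    | true =>
      simp [spec, mt_cons, List.map_map, Function.comp_def]
    | false =>
      cases u' with
      | nil =>
        cases v with
        | nil => simp [spec, mtm, parents_nil]
        | cons b v' =>
          cases b <;> simp [spec, mtm, parents_nil, List.map_map, Function.comp_def]
      | cons b u'' =>
        cases b <;> simp [spec, mt_cons, List.map_map, Function.comp_def]

lemma beta_c : beta [false] = 1 := by
  have h := beta_concat_false []
  simp only [List.nil_append] at h
  rw [h, beta_nil, show parents [false] = [] from rfl]
  simp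

lemma beta_d : beta [true] = 1 := by
  have h := beta_concat_true []
  simp only [List.nil_append] at h
  rw [h, show parents [true] = [[false]] from rfl]
  simp [beta_c]

lemma beta_cc : beta [false, false] = 1 := by
  have h := beta_concat_false [false]
  rw [show [false] ++ [false] = ([false, false] : Mon) from rfl] at h
  rw [h, beta_c, show parents [false, false] = [] from rfl]
  simp

lemma deg_eq_zero {u : Mon} (h : deg u = 0) : u = [] := by
  cases u with
  | nil => rfl
  | cons a t => rw [deg_cons] at h; cases a <;> simp at h

lemma main_aux : ∀ n, ∀ u v : Mon, deg u + deg v ≤ n →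
    beta (u ++ false :: false :: v) ≤ beta (u ++ true :: v) := by
  intro n
  induction n with
  | zero =>
    intro u v huv
    have hu : u = [] := deg_eq_zero (by omega)
    have hv : v = [] := deg_eq_zero (by omega)
    subst hu; subst hv
    simp only [List.nil_append]
    rw [show (false :: false :: [] : Mon) = [false, false] from rfl,
      show (true :: [] : Mon) = [true] from rfl, beta_cc, beta_d]
  | succ n ih =>
    intro u v huv
    -- comparisons of the parent sums
    have hA : ((parents u).map (fun p => beta (p ++ false :: false :: v))).sum ≤
        ((parents u).map (fun p => beta (p ++ true :: v))).sum := by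
      apply List.sum_le_sum
      intro p hp
      have hd := deg_parents hp
      exact ih p v (by omega)
    have hC : ((parents v).map (fun p => beta (u ++ false :: false :: p))).sum ≤
        ((parents v).map (fun p => beta (u ++ true :: p))).sum := by
      apply List.sum_le_sum
      intro p hp
      have hd := deg_parents hp
      exact ih u p (by omega)
    have hB : 0 ≤ ((bterm u v).map beta).sum := by
      apply List.sum_nonneg
      intro q hq
      obtain ⟨p, _, rfl⟩ := List.mem_map.mp hq
      exact beta_nonneg p
    have hM : ((mtm u v).map beta).sum ≤ beta (u ++ false :: v) := by
      cases v with
      | nil => simpa [mtm] using beta_nonneg (u ++ [false])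
      | cons b v' =>
        cases b with
        | false => simpa [mtm] using beta_nonneg (u ++ false :: false :: v')
        | true => simp [mtm]
    have e1 : ((parents (u ++ true :: v)).map beta).sum =
        ((parents u).map (fun p => beta (p ++ true :: v))).sum +
          (((bterm u v).map beta).sum + (beta (u ++ false :: v) +
            ((parents v).map (fun p => beta (u ++ true :: p))).sum)) := by
      rw [parents_mid_true]
      simp [List.map_map, Function.comp_def]
    have e2 : ((parents (u ++ false :: false :: v)).map beta).sum =
        ((parents u).map (fun p => beta (p ++ false :: false :: v))).sum +
          (((mtm u v).map beta).sum +
            ((parents v).map (fun p => beta (u ++ false :: false :: p))).sum) := by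
      rw [parents_mid_ff]
      simp [List.map_map, Function.comp_def]
    rcases List.eq_nil_or_concat v with rfl | ⟨v₀, b, rfl⟩
    · -- v = [] : w₁ ends in d, w₂ ends in c
      rw [show u ++ true :: [] = u ++ [true] from rfl, beta_concat_true,
        show u ++ false :: false :: [] = (u ++ [false]) ++ [false] by simp, beta_concat_false,
        show (u ++ [false]) ++ [false] = u ++ false :: false :: [] by simp, e2]
      rw [show u ++ [true] = u ++ true :: [] from rfl, e1]
      have hmz : ((mtm u ([] : Mon)).map beta).sum = 0 := by simp [mtm]
      simp only [parents_nil, List.map_nil, List.sum_nil, add_zero] at *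
      rw [show u ++ false :: [] = u ++ [false] by rfl] at e1 ⊢
      linarith
    · simp only [List.concat_eq_append] at *
      cases b with
      | true =>
        rw [show u ++ true :: (v₀ ++ [true]) = (u ++ true :: v₀) ++ [true] by simp,
          beta_concat_true,
          show (u ++ true :: v₀) ++ [true] = u ++ true :: (v₀ ++ [true]) by simp, e1,
          show u ++ false :: false :: (v₀ ++ [true]) = (u ++ false :: false :: v₀) ++ [true]
            by simp,
          beta_concat_true,
          show (u ++ false :: false :: v₀) ++ [true] = u ++ false :: false :: (v₀ ++ [true])
            by simp, e2]
        linarith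
      | false =>
        rw [show u ++ true :: (v₀ ++ [false]) = (u ++ true :: v₀) ++ [false] by simp,
          beta_concat_false,
          show (u ++ true :: v₀) ++ [false] = u ++ true :: (v₀ ++ [false]) by simp, e1,
          show u ++ false :: false :: (v₀ ++ [false]) = (u ++ false :: false :: v₀) ++ [false]
            by simp,
          beta_concat_false,
          show (u ++ false :: false :: v₀) ++ [false] = u ++ false :: false :: (v₀ ++ [false])
            by simp, e2]
        have htr : beta (u ++ false :: false :: v₀) ≤ beta (u ++ true :: v₀) := by
          apply ih u v₀
          have : deg (v₀ ++ [false]) = deg v₀ + 1 := by rw [deg_append]; simp [deg]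
          omega
        linarith


/-- For all cd-monomials `u, v`, `β(u d v) ≥ β(u c² v)`,
with equality when `u` and `v` are both empty. -/
theorem beta_d_ge_cc (u v : Mon) :
    beta (u ++ true :: v) ≥ beta (u ++ false :: false :: v)
    ∧ (u = [] → v = [] → beta (u ++ true :: v) = beta (u ++ false :: false :: v)) := by
  constructor
  · exact main_aux _ u v le_rfl
  · rintro rfl rfl
    simp only [List.nil_append]
    rw [show (true :: [] : Mon) = [true] from rfl,
      show (false :: false :: [] : Mon) = [false, false] from rfl, beta_d, beta_cc]
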